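/- arXiv:2507.15623 — 3 statements merged into one kernel-verified Lean document; each statement's English description precedes it below -/
import Mathlib

section
/- Define ℓ(λ, p, a, a*) = m₀ log p + m₊ log(1−p) + m₊ log a + n₀ log(1−λ) + n₀ log p + n₊ log((1−λ)(1−p)a* + λ/n₊) on the region Θ₂* = {λ ∈ [0,1), p ∈ (0,1), a = 1/m₊, a* = 0} (with constraint m₊a + n₊a* = 1). Then the maximum of ℓ over Θ₂* equals (m₀+n₀)log(m₀+n₀) + n₀ log n₀ − n log n − (m+n₀)log(m+n₀), attained at λ = n₊/n and p = (m₀+n₀)/(m₀+n₀+m₊), where m = m₀+m₊ and n = n₀+n₊, assuming m₀, m₊, n₀, n₊ are positive integers. -/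
/-!
On `Θ₂*` the likelihood separates as `[(m₀+n₀) log p + m₊ log(1-p)] + [n₀ log(1-λ) + n₊ log λ]`
plus a constant, and each bracket has the form `a log x + b log(1-x)`. By `log t ≤ t - 1`
(Gibbs' inequality for two outcomes) such a function is maximized at `x = a/(a+b)`, with
maximum `a log a + b log b - (a+b) log(a+b)`.
-/

open Real

lemma mul_log_le_mul_log_add_sub {a y : ℝ} (ha : 0 ≤ a) (hy : 0 < y) :
    a * log y ≤ a * log a + (y - a) := by
  rcases ha.eq_or_lt with rfl | ha
  · simpa using hy.le
  · have h := mul_le_mul_of_nonneg_left (log_le_sub_one_of_pos (div_pos hy ha)) ha.le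
    rw [log_div hy.ne' ha.ne', mul_sub_one, mul_div_cancel₀ y ha.ne'] at h
    linarith

lemma mul_log_self_div (c : ℝ) {x : ℝ} (hx : x ≠ 0) :
    c * log (c / x) = c * log c - c * log x := by
  rcases eq_or_ne c 0 with rfl | hc
  · simp
  · rw [log_div hc hx, mul_sub]

lemma mul_log_div_self (c : ℝ) {x : ℝ} (hx : x ≠ 0) :
    c * log (x / c) = c * log x - c * log c := by
  rw [← inv_div, log_inv, mul_neg, mul_log_self_div c hx]
  ring

theorem mul_log_add_mul_log_one_sub_le {a b x : ℝ} (ha : 0 ≤ a) (hb : 0 ≤ b)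
    (hx₀ : 0 < x) (hx₁ : x < 1) :
    a * log x + b * log (1 - x) ≤ a * log a + b * log b - (a + b) * log (a + b) := by
  rcases (add_nonneg ha hb).eq_or_lt with hs | hs
  · obtain ⟨rfl, rfl⟩ : a = 0 ∧ b = 0 := ⟨by linarith, by linarith⟩
    simp
  · have h₁ := mul_log_le_mul_log_add_sub ha (mul_pos hx₀ hs)
    have h₂ := mul_log_le_mul_log_add_sub hb (mul_pos (sub_pos.2 hx₁) hs)
    rw [log_mul hx₀.ne' hs.ne'] at h₁
    rw [log_mul (sub_pos.2 hx₁).ne' hs.ne'] at h₂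
    linarith

theorem mul_log_div_add_mul_log_one_sub_div {a b : ℝ} (ha : 0 ≤ a) (hb : 0 ≤ b) :
    a * log (a / (a + b)) + b * log (1 - a / (a + b)) =
      a * log a + b * log b - (a + b) * log (a + b) := by
  rcases (add_nonneg ha hb).eq_or_lt with hs | hs
  · obtain ⟨rfl, rfl⟩ : a = 0 ∧ b = 0 := ⟨by linarith, by linarith⟩
    simp
  · have hb' : 1 - a / (a + b) = b / (a + b) := by field_simp; ring
    rw [hb', mul_log_self_div a hs.ne', mul_log_self_div b hs.ne']
    ring

theorem stmt5_general (m₀ mp n₀ np : ℕ) (hnp : 0 < np) :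
    (∀ lam p : ℝ, 0 < lam → lam < 1 → 0 < p → p < 1 →
      (m₀ : ℝ) * Real.log p + (mp : ℝ) * Real.log (1 - p) + (mp : ℝ) * Real.log (1 / (mp : ℝ)) +
          (n₀ : ℝ) * Real.log (1 - lam) + (n₀ : ℝ) * Real.log p +
          (np : ℝ) * Real.log ((1 - lam) * (1 - p) * 0 + lam / (np : ℝ)) ≤
        ((m₀ : ℝ) + n₀) * Real.log ((m₀ : ℝ) + n₀) + (n₀ : ℝ) * Real.log (n₀ : ℝ) -
          ((n₀ : ℝ) + np) * Real.log ((n₀ : ℝ) + np) -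
          (((m₀ : ℝ) + mp) + n₀) * Real.log (((m₀ : ℝ) + mp) + n₀)) ∧
    ((m₀ : ℝ) * Real.log (((m₀ : ℝ) + n₀) / ((m₀ : ℝ) + n₀ + mp)) +
        (mp : ℝ) * Real.log (1 - ((m₀ : ℝ) + n₀) / ((m₀ : ℝ) + n₀ + mp)) +
        (mp : ℝ) * Real.log (1 / (mp : ℝ)) +
        (n₀ : ℝ) * Real.log (1 - (np : ℝ) / ((n₀ : ℝ) + np)) +
        (n₀ : ℝ) * Real.log (((m₀ : ℝ) + n₀) / ((m₀ : ℝ) + n₀ + mp)) +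
        (np : ℝ) * Real.log ((1 - (np : ℝ) / ((n₀ : ℝ) + np)) *
            (1 - ((m₀ : ℝ) + n₀) / ((m₀ : ℝ) + n₀ + mp)) * 0 +
          ((np : ℝ) / ((n₀ : ℝ) + np)) / (np : ℝ)) =
      ((m₀ : ℝ) + n₀) * Real.log ((m₀ : ℝ) + n₀) + (n₀ : ℝ) * Real.log (n₀ : ℝ) -
        ((n₀ : ℝ) + np) * Real.log ((n₀ : ℝ) + np) -
        (((m₀ : ℝ) + mp) + n₀) * Real.log (((m₀ : ℝ) + mp) + n₀)) := by
  have hmp : (0 : ℝ) ≤ mp := mp.cast_nonneg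
  have hn₀ : (0 : ℝ) ≤ n₀ := n₀.cast_nonneg
  have hnp' : (0 : ℝ) < np := Nat.cast_pos.2 hnp
  have hmn₀ : (0 : ℝ) ≤ m₀ + n₀ := by positivity
  have hm : (m₀ : ℝ) + n₀ + mp = m₀ + mp + n₀ := by ring
  have hn : (np : ℝ) + n₀ = n₀ + np := add_comm _ _
  have hlog_mp : (mp : ℝ) * log (1 / mp) = -(mp * log mp) := by rw [one_div, log_inv, mul_neg]
  simp only [mul_zero, zero_add, hlog_mp]
  rw [← hm, ← hn]
  constructor
  · intro lam p hlam₀ hlam₁ hp₀ hp₁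
    have hp := mul_log_add_mul_log_one_sub_le hmn₀ hmp hp₀ hp₁
    have hlam := mul_log_add_mul_log_one_sub_le hnp'.le hn₀ hlam₀ hlam₁
    rw [mul_log_div_self _ hlam₀.ne']
    linarith
  · have hp := mul_log_div_add_mul_log_one_sub_div hmn₀ hmp
    have hlam := mul_log_div_add_mul_log_one_sub_div hnp'.le hn₀
    rw [mul_log_div_self _ (div_pos hnp' (by positivity)).ne']
    linarith

/-- The profile empirical log-likelihood
`ℓ(λ,p,a,a*) = m₀ log p + m₊ log(1-p) + m₊ log a + n₀ log(1-λ) + n₀ log p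
  + n₊ log((1-λ)(1-p)a* + λ/n₊)`
restricted to the region `Θ₂*` (where `a = 1/m₊`, `a* = 0`, `λ ∈ (0,1)`, `p ∈ (0,1)`)
is maximized at `λ = n₊/n`, `p = (m₀+n₀)/(m₀+n₀+m₊)`, with maximum value
`(m₀+n₀)log(m₀+n₀) + n₀ log n₀ − n log n − (m+n₀)log(m+n₀)`,
where `m = m₀+m₊` and `n = n₀+n₊`. -/
theorem stmt5 (m₀ mp n₀ np : ℕ) (hm₀ : 0 < m₀) (hmp : 0 < mp) (hn₀ : 0 < n₀) (hnp : 0 < np) :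
    (∀ lam p : ℝ, 0 < lam → lam < 1 → 0 < p → p < 1 →
      (m₀ : ℝ) * Real.log p + (mp : ℝ) * Real.log (1 - p) + (mp : ℝ) * Real.log (1 / (mp : ℝ)) +
          (n₀ : ℝ) * Real.log (1 - lam) + (n₀ : ℝ) * Real.log p +
          (np : ℝ) * Real.log ((1 - lam) * (1 - p) * 0 + lam / (np : ℝ)) ≤
        ((m₀ : ℝ) + n₀) * Real.log ((m₀ : ℝ) + n₀) + (n₀ : ℝ) * Real.log (n₀ : ℝ) -
          ((n₀ : ℝ) + np) * Real.log ((n₀ : ℝ) + np) -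
          (((m₀ : ℝ) + mp) + n₀) * Real.log (((m₀ : ℝ) + mp) + n₀)) ∧
    ((m₀ : ℝ) * Real.log (((m₀ : ℝ) + n₀) / ((m₀ : ℝ) + n₀ + mp)) +
        (mp : ℝ) * Real.log (1 - ((m₀ : ℝ) + n₀) / ((m₀ : ℝ) + n₀ + mp)) +
        (mp : ℝ) * Real.log (1 / (mp : ℝ)) +
        (n₀ : ℝ) * Real.log (1 - (np : ℝ) / ((n₀ : ℝ) + np)) +
        (n₀ : ℝ) * Real.log (((m₀ : ℝ) + n₀) / ((m₀ : ℝ) + n₀ + mp)) +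
        (np : ℝ) * Real.log ((1 - (np : ℝ) / ((n₀ : ℝ) + np)) *
            (1 - ((m₀ : ℝ) + n₀) / ((m₀ : ℝ) + n₀ + mp)) * 0 +
          ((np : ℝ) / ((n₀ : ℝ) + np)) / (np : ℝ)) =
      ((m₀ : ℝ) + n₀) * Real.log ((m₀ : ℝ) + n₀) + (n₀ : ℝ) * Real.log (n₀ : ℝ) -
        ((n₀ : ℝ) + np) * Real.log ((n₀ : ℝ) + np) -
        (((m₀ : ℝ) + mp) + n₀) * Real.log (((m₀ : ℝ) + mp) + n₀)) :=
  stmt5_general m₀ mp n₀ np hnp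
end

section
/- Suppose the system of equations holds: (i) (1−λ)(1−p)a* + λ/n₊ = 1/n, (ii) (1−λ)(1−p) + λ = (m₊+n₊)/n, and (iii) (m+n)p = m₀+n₀+nλ, where m = m₀+m₊ and n = n₀+n₊ with all of m₀, m₊, n₀, n₊ positive. Then p = 1. -/
/-- The stationarity equations from the interior region `Θ₁*` force `p = 1`.
Here `m = m₀+m₊`, `n = n₀+n₊` with all counts positive and `λ ≥ 0`. -/
theorem stmt7 (m₀ mp n₀ np lam p astar : ℝ)
    (hm₀ : 0 < m₀) (hmp : 0 < mp) (hn₀ : 0 < n₀) (hnp : 0 < np) (hlam : 0 ≤ lam)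
    (h1 : (1 - lam) * (1 - p) * astar + lam / np = 1 / (n₀ + np))
    (h2 : (1 - lam) * (1 - p) + lam = (mp + np) / (n₀ + np))
    (h3 : ((m₀ + mp) + (n₀ + np)) * p = m₀ + n₀ + (n₀ + np) * lam) :
    p = 1 := by
  have hn : (0:ℝ) < n₀ + np := by linarith
  have h2' : ((1 - lam) * (1 - p) + lam) * (n₀ + np) = mp + np := by
    field_simp at h2; linarith [h2]
  have key : (1 - p) * ((m₀ + mp) + (n₀ + np) * lam) = 0 := by nlinarith [h2', h3]
  have hpos : 0 < (m₀ + mp) + (n₀ + np) * lam := by positivity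
  have := mul_eq_zero.mp key
  rcases this with h | h
  · linarith
  · linarith
end

section
/- Let w_h > 0 and r_h ∈ [0,1] for h = 1,…,K. The maximizer over nondecreasing sequences 0 ≤ F₁ ≤ F₂ ≤ ⋯ ≤ F_K ≤ 1 of Σ_h w_h [r_h log F_h + (1−r_h) log(1−F_h)] coincides with the minimizer over the same monotone class of the weighted least-squares criterion Σ_h w_h (r_h − F_h)², i.e., the isotonic regression of (r_h) with weights (w_h). -/
/-!
Both objectives are separable and concave (the least-squares one after a change of sign), so on
the convex monotone class `F` is optimal iff the derivative of the objective at `F` is nonpositive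
in every direction `G - F` with `G` in the class. The two gradients differ coordinatewise by the
positive factor `2 F_h (1 - F_h)`, which depends on `h` only through `F_h`, and such a rescaling
preserves this first-order condition on the monotone class.
-/

open Finset Real Filter Set Topology

theorem ConcaveOn.isMaxOn_iff_deriv_lineMap_nonpos {E : Type*} [AddCommGroup E] [Module ℝ E]
    {s : Set E} {f : E → ℝ} (hf : ConcaveOn ℝ s f) {x : E} (hx : x ∈ s) {D : E → ℝ}
    (hD : ∀ y ∈ s, HasDerivAt (fun t : ℝ => f (AffineMap.lineMap x y t)) (D y) 0) :
    IsMaxOn f s x ↔ ∀ y ∈ s, D y ≤ 0 := by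
  have hseg : ∀ y ∈ s, Icc (0 : ℝ) 1 ⊆ AffineMap.lineMap x y ⁻¹' s :=
    fun y hy t ht => hf.1.lineMap_mem hx hy ht
  constructor
  · intro hmax y hy
    have hloc : IsLocalMaxOn (fun t : ℝ => f (AffineMap.lineMap x y t)) (Icc 0 1) 0 :=
      IsMaxOn.localize fun t ht => by simpa using hmax (hseg y hy ht)
    have hone : (1 : ℝ) ∈ posTangentConeAt (Icc (0 : ℝ) 1) 0 :=
      mem_posTangentConeAt_of_segment_subset (by simp [segment_eq_Icc])
    simpa using hloc.hasFDerivWithinAt_nonpos (hD y hy).hasFDerivAt.hasFDerivWithinAt hone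
  · refine fun hD' => isMaxOn_iff.2 fun y hy => ?_
    have hg := (hf.comp_affineMap (AffineMap.lineMap x y)).subset (hseg y hy) (convex_Icc 0 1)
    have hslope := hg.slope_le_of_hasDerivAt (by simp) (by simp) zero_lt_one (hD y hy)
    simp only [slope_def_field, Function.comp_apply, AffineMap.lineMap_apply_one,
      AffineMap.lineMap_apply_zero, sub_zero, div_one] at hslope
    linarith [hD' y hy]

section Separable

variable {ι : Type*} [Fintype ι]

theorem concaveOn_sum_apply {I : Set ℝ} {s : Set (ι → ℝ)} (hs : Convex ℝ s)
    (hsI : ∀ y ∈ s, ∀ i, y i ∈ I) {φ : ι → ℝ → ℝ} (hφ : ∀ i, ConcaveOn ℝ I (φ i)) :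
    ConcaveOn ℝ s (fun y => ∑ i, φ i (y i)) := by
  refine ⟨hs, fun y hy z hz a b ha hb hab => ?_⟩
  simp only [smul_eq_mul, mul_sum, ← sum_add_distrib, Pi.add_apply, Pi.smul_apply]
  exact sum_le_sum fun i _ => (hφ i).2 (hsI y hy i) (hsI z hz i) ha hb hab

theorem hasDerivAt_sum_apply_lineMap {φ : ι → ℝ → ℝ} {φ' : ι → ℝ} {x : ι → ℝ}
    (hφ : ∀ i, HasDerivAt (φ i) (φ' i) (x i)) (y : ι → ℝ) :
    HasDerivAt (fun t : ℝ => ∑ i, φ i (AffineMap.lineMap x y t i))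
      (∑ i, φ' i * (y i - x i)) 0 := by
  refine HasDerivAt.fun_sum fun i _ => ?_
  have hline : HasDerivAt (fun t : ℝ => AffineMap.lineMap x y t i) (y i - x i) 0 := by
    simp only [AffineMap.lineMap_apply_module', Pi.add_apply, Pi.smul_apply, smul_eq_mul,
      Pi.sub_apply]
    simpa using ((hasDerivAt_id (0 : ℝ)).mul_const (y i - x i)).add_const (x i)
  exact (hφ i).comp_of_eq (x := 0) hline (by simp)

theorem isMaxOn_sum_apply_iff {I : Set ℝ} {s : Set (ι → ℝ)} (hs : Convex ℝ s)
    (hsI : ∀ y ∈ s, ∀ i, y i ∈ I) {φ : ι → ℝ → ℝ} {φ' : ι → ℝ}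
    (hφ : ∀ i, ConcaveOn ℝ I (φ i)) {x : ι → ℝ} (hx : x ∈ s)
    (hφ' : ∀ i, HasDerivAt (φ i) (φ' i) (x i)) :
    IsMaxOn (fun y => ∑ i, φ i (y i)) s x ↔ ∀ y ∈ s, ∑ i, φ' i * (y i - x i) ≤ 0 :=
  (concaveOn_sum_apply hs hsI hφ).isMaxOn_iff_deriv_lineMap_nonpos hx
    fun y _ => hasDerivAt_sum_apply_lineMap hφ' y

end Separable

section MonotoneClass

variable {ι : Type*} [Preorder ι]

theorem convex_setOf_monotone {U : Set ℝ} (hU : Convex ℝ U) :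
    Convex ℝ {G : ι → ℝ | Monotone G ∧ ∀ i, G i ∈ U} := by
  intro x hx y hy a b ha hb hab
  refine ⟨fun i j hij => ?_, fun i => hU (hx.2 i) (hy.2 i) ha hb hab⟩
  simp only [Pi.add_apply, Pi.smul_apply, smul_eq_mul]
  gcongr
  exacts [hx.1 hij, hy.1 hij]

variable [Fintype ι]

/- For small `s > 0`, `F + s • c * (G - F)` stays in the monotone class: on a level set of `F`
the factor `c` is constant, so there the increment is monotone like `G`, and between level sets
`F` has a strict gap. -/
theorem sum_mul_mul_sub_nonpos {U : Set ℝ} (hU : IsOpen U) {F c u : ι → ℝ}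
    (hF : F ∈ {G : ι → ℝ | Monotone G ∧ ∀ i, G i ∈ U}) (hc : ∀ i, 0 < c i)
    (hcF : ∀ i j, F i = F j → c i = c j)
    (hu : ∀ G ∈ {G : ι → ℝ | Monotone G ∧ ∀ i, G i ∈ U}, ∑ i, u i * (G i - F i) ≤ 0)
    {G : ι → ℝ} (hG : G ∈ {G : ι → ℝ | Monotone G ∧ ∀ i, G i ∈ U}) :
    ∑ i, c i * u i * (G i - F i) ≤ 0 := by
  obtain ⟨hFm, hFU⟩ := hF
  obtain ⟨hGm, hGU⟩ := hG
  set H : ℝ → ι → ℝ := fun s i => F i + s * (c i * (G i - F i)) with hH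
  have hlim : ∀ i, Tendsto (fun s => H s i) (𝓝 0) (𝓝 (F i)) := fun i => by
    simpa [hH] using ((continuous_id.mul continuous_const).const_add (F i)).tendsto' 0 (F i)
      (by simp)
  have hval : ∀ᶠ s in 𝓝[>] 0, ∀ i, H s i ∈ U :=
    eventually_all.2 fun i => nhdsWithin_le_nhds ((hlim i).eventually (hU.mem_nhds (hFU i)))
  have hmono : ∀ᶠ s in 𝓝[>] 0, ∀ i j, i ≤ j → H s i ≤ H s j := by
    refine eventually_all.2 fun i => eventually_all.2 fun j => ?_
    by_cases hij : i ≤ j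
    · rcases (hFm hij).lt_or_eq with hlt | heq
      · exact nhdsWithin_le_nhds (((hlim i).eventually_lt (hlim j) hlt).mono fun s hs _ => hs.le)
      · filter_upwards [self_mem_nhdsWithin] with s (hs : 0 < s) _
        have := mul_nonneg hs.le (mul_nonneg (hc j).le (sub_nonneg.2 (hGm hij)))
        simp only [hH, heq, hcF i j heq]
        nlinarith
    · exact Eventually.of_forall fun _ h => absurd h hij
  obtain ⟨s, ⟨hsm, hsU⟩, hs⟩ := ((hmono.and hval).and self_mem_nhdsWithin).exists
  have hstep : ∑ i, u i * (H s i - F i) = s * ∑ i, c i * u i * (G i - F i) := by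
    simp only [hH, mul_sum]
    exact sum_congr rfl fun i _ => by ring
  have := hu (H s) ⟨fun i j hij => hsm i j hij, hsU⟩
  rw [hstep] at this
  exact nonpos_of_mul_nonpos_right this hs

theorem forall_sum_mul_sub_nonpos_iff {U : Set ℝ} (hU : IsOpen U) {F c u v : ι → ℝ}
    (hF : F ∈ {G : ι → ℝ | Monotone G ∧ ∀ i, G i ∈ U}) (hc : ∀ i, 0 < c i)
    (hcF : ∀ i j, F i = F j → c i = c j) (hv : ∀ i, v i = c i * u i) :
    (∀ G ∈ {G : ι → ℝ | Monotone G ∧ ∀ i, G i ∈ U}, ∑ i, u i * (G i - F i) ≤ 0) ↔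
      ∀ G ∈ {G : ι → ℝ | Monotone G ∧ ∀ i, G i ∈ U}, ∑ i, v i * (G i - F i) ≤ 0 := by
  refine ⟨fun hu G hG => ?_, fun hv' G hG => ?_⟩
  · simpa only [hv] using sum_mul_mul_sub_nonpos hU hF hc hcF hu hG
  · have := sum_mul_mul_sub_nonpos hU hF (fun i => inv_pos.2 (hc i))
      (fun i j h => by rw [hcF i j h]) hv' hG
    simpa only [hv, inv_mul_cancel_left₀ (hc _).ne'] using this

end MonotoneClass

theorem concaveOn_bernoulli_logLik {w r : ℝ} (hw : 0 ≤ w) (hr : r ∈ Icc (0 : ℝ) 1) :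
    ConcaveOn ℝ (Ioo 0 1) fun z => w * (r * log z + (1 - r) * log (1 - z)) := by
  have hlog : ConcaveOn ℝ (Ioo 0 1) log :=
    strictConcaveOn_log_Ioi.concaveOn.subset Ioo_subset_Ioi_self (convex_Ioo 0 1)
  have hlog_one_sub : ConcaveOn ℝ (Ioo 0 1) fun z => log (1 - z) := by
    refine ⟨convex_Ioo 0 1, fun x hx y hy a b ha hb hab => ?_⟩
    convert strictConcaveOn_log_Ioi.concaveOn.2 (sub_pos.2 hx.2) (sub_pos.2 hy.2) ha hb hab
      using 2
    simp only [smul_eq_mul]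
    linear_combination -hab
  exact ((hlog.smul hr.1).add (hlog_one_sub.smul (sub_nonneg.2 hr.2))).smul hw

theorem hasDerivAt_bernoulli_logLik (w r : ℝ) {x : ℝ} (hx : x ∈ Ioo (0 : ℝ) 1) :
    HasDerivAt (fun z => w * (r * log z + (1 - r) * log (1 - z)))
      (w * (r - x) / (x * (1 - x))) x := by
  have hx0 : x ≠ 0 := hx.1.ne'
  have h1x : 1 - x ≠ 0 := (sub_pos.2 hx.2).ne'
  have hlog := hasDerivAt_log hx0
  have hlog_one_sub := ((hasDerivAt_id' x).const_sub 1).log h1x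
  refine (((hlog.const_mul r).add (hlog_one_sub.const_mul (1 - r))).const_mul w).congr_deriv ?_
  field_simp
  ring

theorem concaveOn_neg_mul_sq {w : ℝ} (hw : 0 ≤ w) (r : ℝ) :
    ConcaveOn ℝ univ fun z => -(w * (r - z) ^ 2) := by
  refine ⟨convex_univ, fun x _ y _ a b ha hb hab => ?_⟩
  obtain rfl : b = 1 - a := by linarith
  simp only [smul_eq_mul]
  nlinarith [mul_nonneg (mul_nonneg hw ha) (mul_nonneg hb (sq_nonneg (x - y)))]

theorem hasDerivAt_neg_mul_sq (w r x : ℝ) :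
    HasDerivAt (fun z => -(w * (r - z) ^ 2)) (2 * w * (r - x)) x := by
  refine ((((hasDerivAt_id' x).const_sub r).pow 2).const_mul w).neg.congr_deriv ?_
  ring

/-- Isotonic-regression reduction used in the M-step: over the monotone class
`C = {F | Monotone F, F h ∈ (0,1)}`, a point maximizes the weighted Bernoulli
log-likelihood `Σ w_h (r_h log F_h + (1−r_h) log(1−F_h))` iff it minimizes the
weighted least-squares criterion `Σ w_h (r_h − F_h)²` (weighted isotonic
regression of `(r_h)`). -/
theorem stmt12 (K : ℕ) (w r : Fin K → ℝ) (hw : ∀ h, 0 < w h)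
    (hr : ∀ h, r h ∈ Set.Icc (0:ℝ) 1)
    (C : Set (Fin K → ℝ))
    (hC : C = {F : Fin K → ℝ | Monotone F ∧ ∀ h, F h ∈ Set.Ioo (0:ℝ) 1})
    (F : Fin K → ℝ) (hF : F ∈ C) :
    IsMaxOn (fun G : Fin K → ℝ =>
        ∑ h, w h * (r h * Real.log (G h) + (1 - r h) * Real.log (1 - G h))) C F ↔
      IsMinOn (fun G : Fin K → ℝ => ∑ h, w h * (r h - G h)^2) C F := by
  subst hC
  set C := {F : Fin K → ℝ | Monotone F ∧ ∀ h, F h ∈ Ioo (0 : ℝ) 1}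
  have hconv : Convex ℝ C := convex_setOf_monotone (convex_Ioo 0 1)
  have hF0 : ∀ h, 0 < F h := fun h => (hF.2 h).1
  have hF1 : ∀ h, 0 < 1 - F h := fun h => sub_pos.2 (hF.2 h).2
  calc _ ↔ ∀ G ∈ C, ∑ h, w h * (r h - F h) / (F h * (1 - F h)) * (G h - F h) ≤ 0 :=
        isMaxOn_sum_apply_iff hconv (fun G hG h => hG.2 h)
          (fun h => concaveOn_bernoulli_logLik (hw h).le (hr h)) hF
          (fun h => hasDerivAt_bernoulli_logLik _ _ (hF.2 h))
    _ ↔ ∀ G ∈ C, ∑ h, 2 * w h * (r h - F h) * (G h - F h) ≤ 0 :=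
        forall_sum_mul_sub_nonpos_iff isOpen_Ioo hF (c := fun h => 2 * (F h * (1 - F h)))
          (fun h => mul_pos two_pos (mul_pos (hF0 h) (hF1 h)))
          (fun i j hij => by simp only [hij])
          (fun h => by field_simp [(hF0 h).ne', (hF1 h).ne'])
    _ ↔ IsMaxOn (fun G => ∑ h, -(w h * (r h - G h) ^ 2)) C F :=
        (isMaxOn_sum_apply_iff hconv (fun _ _ _ => mem_univ _)
          (fun h => concaveOn_neg_mul_sq (hw h).le (r h)) hF
          (fun h => hasDerivAt_neg_mul_sq _ _ _)).symm
    _ ↔ _ := by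
        simp only [sum_neg_distrib]
        exact ⟨fun h => by simpa using h.neg, IsMinOn.neg⟩
end
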